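/- arXiv:2303.10233 — 2 statements merged into one kernel-verified Lean document; each statement's English description precedes it below -/
import Mathlib

section
/- Suppose (φ_1,…,φ_m) and (ψ_1,…,ψ_r) are each linearly independent families in a real inner product space, and the only vector lying in both span{φ_i} and span{ψ_j} is a one-dimensional subspace spanned by a nonzero vector c which can be written c = ∑ aᵢ φᵢ = ∑ bⱼ ψⱼ. Then the nullspace of the Gram matrix of the combined family (φ_1,…,φ_m, ψ_1,…,ψ_r) is the one-dimensional span of the vector k = (a_1,…,a_m, −b_1,…,−b_r). -/
open Matrix

open scoped RealInnerProductSpace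

/-!
The Gram matrix of a family is positive semidefinite with `x⋆ G x = ‖∑ xᵢ vᵢ‖²`, so its nullspace
consists of the coefficient vectors of the vanishing linear combinations of the family. For the
combined family `(φ, ψ)` such a relation `∑ xᵢ φᵢ = -∑ yⱼ ψⱼ` is a vector of
`span φ ⊓ span ψ = ℝ ∙ c`, say `t • c`; linear independence of `φ` and of `ψ` then forces
`x = t • a` and `-y = t • b`.
-/

section Gram

variable {𝕜 E n : Type*} [RCLike 𝕜] [NormedAddCommGroup E] [InnerProductSpace 𝕜 E] [Fintype n]

theorem Matrix.gram_mulVec_eq_zero_iff (v : n → E) (x : n → 𝕜) :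
    gram 𝕜 v *ᵥ x = 0 ↔ Fintype.linearCombination 𝕜 v x = 0 := by
  rw [← (posSemidef_gram 𝕜 v).dotProduct_mulVec_zero_iff, star_dotProduct_gram_mulVec,
    inner_self_eq_zero, Fintype.linearCombination_apply]

theorem Matrix.ker_toLin'_gram [DecidableEq n] (v : n → E) :
    LinearMap.ker (toLin' (gram 𝕜 v)) = LinearMap.ker (Fintype.linearCombination 𝕜 v) := by
  ext x
  simp only [LinearMap.mem_ker, toLin'_apply, gram_mulVec_eq_zero_iff]

end Gram

section SumElim

variable {R M ι κ : Type*} [Ring R] [AddCommGroup M] [Module R M] [Fintype ι] [Fintype κ]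

theorem Fintype.linearCombination_sumElim (φ : ι → M) (ψ : κ → M) (x : ι ⊕ κ → R) :
    Fintype.linearCombination R (Sum.elim φ ψ) x =
      Fintype.linearCombination R φ (x ∘ Sum.inl) +
        Fintype.linearCombination R ψ (x ∘ Sum.inr) := by
  simp only [Fintype.linearCombination_apply, Fintype.sum_sum_type, Function.comp_apply,
    Sum.elim_inl, Sum.elim_inr]

theorem Fintype.linearCombination_mem_span_range (φ : ι → M) (x : ι → R) :
    Fintype.linearCombination R φ x ∈ Submodule.span R (Set.range φ) := by
  rw [← Fintype.range_linearCombination]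
  exact LinearMap.mem_range_self _ x

theorem ker_fintypeLinearCombination_sumElim {φ : ι → M} {ψ : κ → M}
    (hφ : LinearIndependent R φ) (hψ : LinearIndependent R ψ) {c : M}
    (hinter : Submodule.span R (Set.range φ) ⊓ Submodule.span R (Set.range ψ) = R ∙ c)
    {a : ι → R} {b : κ → R} (hca : Fintype.linearCombination R φ a = c)
    (hcb : Fintype.linearCombination R ψ b = c) :
    LinearMap.ker (Fintype.linearCombination R (Sum.elim φ ψ)) = R ∙ Sum.elim a (-b) := by
  ext x
  rw [LinearMap.mem_ker, Fintype.linearCombination_sumElim, Submodule.mem_span_singleton]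
  constructor
  · intro hx
    have hu : Fintype.linearCombination R φ (x ∘ Sum.inl) =
        Fintype.linearCombination R ψ (-(x ∘ Sum.inr)) := by
      rw [map_neg]
      exact eq_neg_of_add_eq_zero_left hx
    have hmem : Fintype.linearCombination R φ (x ∘ Sum.inl) ∈
        Submodule.span R (Set.range φ) ⊓ Submodule.span R (Set.range ψ) :=
      ⟨Fintype.linearCombination_mem_span_range φ _,
        hu ▸ Fintype.linearCombination_mem_span_range ψ _⟩
    obtain ⟨t, ht⟩ := Submodule.mem_span_singleton.mp (hinter ▸ hmem)
    have hl : t • a = x ∘ Sum.inl :=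
      hφ.fintypeLinearCombination_injective (by rw [map_smul, hca, ht])
    have hr : t • b = -(x ∘ Sum.inr) :=
      hψ.fintypeLinearCombination_injective (by rw [map_smul, hcb, ht, hu])
    refine ⟨t, funext fun i => ?_⟩
    rcases i with i | j
    · exact congrFun hl i
    · simpa using congrArg Neg.neg (congrFun hr j)
  · rintro ⟨t, rfl⟩
    have hl : (t • Sum.elim a (-b)) ∘ Sum.inl = t • a := rfl
    have hr : (t • Sum.elim a (-b)) ∘ Sum.inr = -(t • b) := by
      ext j
      simp
    rw [hl, hr, map_neg, map_smul, map_smul, hca, hcb, add_neg_cancel]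

end SumElim

theorem stmt_3_general {E : Type*} [NormedAddCommGroup E] [InnerProductSpace ℝ E]
    {m r : ℕ} (φ : Fin m → E) (ψ : Fin r → E)
    (hφ : LinearIndependent ℝ φ) (hψ : LinearIndependent ℝ ψ)
    (c : E)
    (hinter : Submodule.span ℝ (Set.range φ) ⊓ Submodule.span ℝ (Set.range ψ) =
      Submodule.span ℝ {c})
    (a : Fin m → ℝ) (b : Fin r → ℝ)
    (hca : c = ∑ i, a i • φ i) (hcb : c = ∑ j, b j • ψ j)
    (G : Matrix (Fin m ⊕ Fin r) (Fin m ⊕ Fin r) ℝ)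
    (hG : ∀ i j, G i j = inner ℝ (Sum.elim φ ψ i) (Sum.elim φ ψ j)) :
    LinearMap.ker (Matrix.toLin' G) =
      Submodule.span ℝ {Sum.elim a (fun j => -b j)} := by
  obtain rfl : G = gram ℝ (Sum.elim φ ψ) := Matrix.ext hG
  rw [ker_toLin'_gram]
  exact ker_fintypeLinearCombination_sumElim hφ hψ hinter hca.symm hcb.symm

theorem stmt_3 {E : Type*} [NormedAddCommGroup E] [InnerProductSpace ℝ E]
    {m r : ℕ} (φ : Fin m → E) (ψ : Fin r → E)
    (hφ : LinearIndependent ℝ φ) (hψ : LinearIndependent ℝ ψ)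
    (c : E) (hc : c ≠ 0)
    (hinter : Submodule.span ℝ (Set.range φ) ⊓ Submodule.span ℝ (Set.range ψ) =
      Submodule.span ℝ {c})
    (a : Fin m → ℝ) (b : Fin r → ℝ)
    (hca : c = ∑ i, a i • φ i) (hcb : c = ∑ j, b j • ψ j)
    (G : Matrix (Fin m ⊕ Fin r) (Fin m ⊕ Fin r) ℝ)
    (hG : ∀ i j, G i j = inner ℝ (Sum.elim φ ψ i) (Sum.elim φ ψ j)) :
    LinearMap.ker (Matrix.toLin' G) =
      Submodule.span ℝ {Sum.elim a (fun j => -b j)} :=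
  stmt_3_general φ ψ hφ hψ c hinter a b hca hcb G hG
end

section
/- Let M be symmetric positive semidefinite and write M = L + D + Lᵀ with D = diag(M) positive definite and L strictly lower triangular. Then the symmetric Gauss–Seidel iteration matrix G = (D+Lᵀ)⁻¹ D (D+L)⁻¹ M satisfies 0 ≤ xᵀ M G x ≤ xᵀ M x for all x, i.e. all eigenvalues of G restricted to the range of M lie in [0, 1]. -/
/-!
Put `A = D + L`, so that `D + Lᵀ = Aᵀ` and the splitting reads `D = A + Aᵀ - M`. With
`y = A⁻¹ M x` the form `xᵀ M G x` equals `yᵀ D y ≥ 0`, and since `A y = M x` one checks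
`xᵀ M x - yᵀ (A + Aᵀ - M) y = (x - y)ᵀ M (x - y) ≥ 0`. This works for any invertible `A` with
`A + Aᵀ - M` positive semidefinite.
-/

open Matrix

namespace Matrix

section CommRing

variable {m R : Type*} [Fintype m] [CommRing R]

theorem dotProduct_mulVec_sub_eq {M A : Matrix m m R} (hM : Mᵀ = M) {x y : m → R}
    (hy : A *ᵥ y = M *ᵥ x) :
    x ⬝ᵥ M *ᵥ x - y ⬝ᵥ (A + Aᵀ - M) *ᵥ y = (x - y) ⬝ᵥ M *ᵥ (x - y) := by
  have hAT : y ⬝ᵥ Aᵀ *ᵥ y = y ⬝ᵥ M *ᵥ x := by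
    rw [dotProduct_transpose_mulVec, hy]
  have hMsymm : x ⬝ᵥ M *ᵥ y = y ⬝ᵥ M *ᵥ x := by
    rw [← dotProduct_transpose_mulVec, hM]
  simp only [sub_mulVec, add_mulVec, mulVec_sub, dotProduct_sub, sub_dotProduct, dotProduct_add,
    hy, hAT, hMsymm]
  ring

variable [DecidableEq m]

theorem dotProduct_mulVec_transpose_inv_mul (M A N : Matrix m m R) (hM : Mᵀ = M) (x : m → R) :
    x ⬝ᵥ M *ᵥ ((Aᵀ⁻¹ * N * A⁻¹ * M) *ᵥ x) =
      (A⁻¹ *ᵥ M *ᵥ x) ⬝ᵥ N *ᵥ (A⁻¹ *ᵥ M *ᵥ x) := by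
  conv_lhs => rw [← hM]
  rw [← transpose_nonsing_inv, ← mulVec_mulVec, ← mulVec_mulVec, ← mulVec_mulVec,
    dotProduct_transpose_mulVec, dotProduct_comm, dotProduct_transpose_mulVec, dotProduct_comm, hM]

theorem det_diagonal_add_of_strictLower [LinearOrder m] (d : m → R) {L : Matrix m m R}
    (hL : ∀ i j, i ≤ j → L i j = 0) :
    (diagonal d + L).det = ∏ i, d i := by
  have hlower : (diagonal d + L).IsLowerTriangular :=
    (blockTriangular_diagonal d).add fun i j hij => hL i j hij.le
  simp [det_of_isLowerTriangular _ hlower, hL]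

end CommRing

theorem symmGaussSeidel_quadForm_mem_Icc {m : Type*} [Fintype m] [DecidableEq m]
    {M A : Matrix m m ℝ} (hM : M.PosSemidef) (hA : IsUnit A.det)
    (hD : (A + Aᵀ - M).PosSemidef) (x : m → ℝ) :
    x ⬝ᵥ M *ᵥ ((Aᵀ⁻¹ * (A + Aᵀ - M) * A⁻¹ * M) *ᵥ x) ∈ Set.Icc 0 (x ⬝ᵥ M *ᵥ x) := by
  have hMsymm : Mᵀ = M := hM.isHermitian
  have hy : A *ᵥ (A⁻¹ *ᵥ M *ᵥ x) = M *ᵥ x := by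
    rw [mulVec_mulVec, mul_nonsing_inv A hA, one_mulVec]
  rw [dotProduct_mulVec_transpose_inv_mul M A _ hMsymm]
  refine ⟨by simpa only [star_trivial] using hD.dotProduct_mulVec_nonneg _, ?_⟩
  have hdiff := hM.dotProduct_mulVec_nonneg (x - A⁻¹ *ᵥ M *ᵥ x)
  rw [star_trivial, ← dotProduct_mulVec_sub_eq hMsymm hy] at hdiff
  linarith

end Matrix

theorem stmt_17 {n : ℕ}
    (M L : Matrix (Fin n) (Fin n) ℝ) (hM : M.PosSemidef)
    (hdiag : ∀ i, 0 < M i i)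
    (hL : ∀ i j : Fin n, i ≤ j → L i j = 0)
    (hsplit : M = L + Matrix.diagonal (fun i => M i i) + Lᵀ) :
    ∀ x : Fin n → ℝ,
      0 ≤ x ⬝ᵥ M.mulVec
          (((Matrix.diagonal (fun i => M i i) + Lᵀ)⁻¹ *
            Matrix.diagonal (fun i => M i i) *
            (Matrix.diagonal (fun i => M i i) + L)⁻¹ * M).mulVec x) ∧
      x ⬝ᵥ M.mulVec
          (((Matrix.diagonal (fun i => M i i) + Lᵀ)⁻¹ *
            Matrix.diagonal (fun i => M i i) *
            (Matrix.diagonal (fun i => M i i) + L)⁻¹ * M).mulVec x) ≤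
        x ⬝ᵥ M.mulVec x := by
  intro x
  set D := diagonal fun i => M i i
  have hAT : D + Lᵀ = (D + L)ᵀ := by rw [transpose_add, diagonal_transpose]
  have hD : D = (D + L) + (D + L)ᵀ - M := by
    rw [← hAT, hsplit]
    abel
  have hA : IsUnit (D + L).det := by
    rw [det_diagonal_add_of_strictLower _ hL]
    exact (Finset.prod_pos fun i _ => hdiag i).ne'.isUnit
  have hDpsd : (D + L + (D + L)ᵀ - M).PosSemidef := by
    rw [← hD]
    exact posSemidef_diagonal_iff.mpr fun i => (hdiag i).le
  have key := symmGaussSeidel_quadForm_mem_Icc hM hA hDpsd x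
  rwa [← hD, ← hAT] at key
end
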